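/- Let $M,N$ be dual lattices with $\deg\in M$, $\deg^{\vee}\in N$ and finite sets $\Delta\subset M$, $\Delta^{\vee}\subset N$ satisfying $m\cdot\deg^{\vee}=1$, $\deg\cdot n=1$, $m\cdot n\geq 0$. In the complex $\mathcal{C}_{K_N^{\vee}-\deg,K_N,N}$ with basis elements indexed by $(m-\deg,n,P)$ where $m\in K_N^{\vee}\cap M$, $n\in K_N\cap N$, $m\cdot n=0$, and $P\in\Lambda^*(N_{\mathbb{C}})$, the differential term associated with $m_1\in\Delta$ acts by contraction of $P$ by $m_1$ and is nonzero only when $m_1\cdot n=0$, and the differential term associated with $n_1\in\Delta^{\vee}$ acts by wedging $P$ with $n_1$ and is nonzero only when $m\cdot n_1=0$; consequently the total differential squares to zero. -/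

import Mathlib

noncomputable section

open scoped Classical

/-- The pairing between the dual lattices `M = N = ℤ^d`. -/
def dotZ {d : ℕ} (m n : Fin d → ℤ) : ℤ := ∑ i, m i * n i

variable {d : ℕ}

/-- The exterior algebra `Λ^*(N_ℂ)`. -/
abbrev Lam (d : ℕ) := ExteriorAlgebra ℂ (Fin d → ℂ)

/-- Ambient module; the complex `𝒞_{K_N^∨ − deg, K_N, N}` is realized as the subspace
supported on pairs `(m, n)` (the basis element indexed by `(m − deg, n, P)`) with
`m ∈ K_N^∨`, `n ∈ K_N`, `m·n = 0`, and with values `P ∈ Λ^*(N_ℂ)`. -/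
abbrev Amb (d : ℕ) := ((Fin d → ℤ) × (Fin d → ℤ)) →₀ Lam d

/-- Admissibility: `m ∈ K_N^∨` (nonnegative pairing with the cone `K_N` generated by
`Δ^∨`), `n ∈ K_N`, and `m·n = 0`. -/
def AdmB (KN : AddSubmonoid (Fin d → ℤ)) (p : (Fin d → ℤ) × (Fin d → ℤ)) : Prop :=
  (∀ n ∈ KN, 0 ≤ dotZ p.1 n) ∧ p.2 ∈ KN ∧ dotZ p.1 p.2 = 0

/-- Reduction modulo the monomials `[m ⊕ n]` with `m·n > 0`. -/
def projB (KN : AddSubmonoid (Fin d → ℤ)) : Amb d →ₗ[ℂ] Amb d :=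
  Finsupp.lsum ℂ fun p => if AdmB KN p then (Finsupp.lsingle p : Lam d →ₗ[ℂ] Amb d) else 0

/-- Multiplication by the monomial `[a.1 ⊕ a.2]`. -/
def shiftB (a : (Fin d → ℤ) × (Fin d → ℤ)) : Amb d →ₗ[ℂ] Amb d :=
  Finsupp.lmapDomain (Lam d) ℂ (fun p => p + a)

/-- Exterior multiplication by `n₁ ∈ N` on the `Λ^*(N_ℂ)` factor. -/
def wedgeB (n₁ : Fin d → ℤ) : Amb d →ₗ[ℂ] Amb d :=
  Finsupp.mapRange.linearMap
    (LinearMap.mulLeft ℂ (ExteriorAlgebra.ι ℂ (fun i => (n₁ i : ℂ))))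

/-- Contraction by `m₁ ∈ M` (via the duality pairing) on the `Λ^*(N_ℂ)` factor. -/
def contrB (m₁ : Fin d → ℤ) : Amb d →ₗ[ℂ] Amb d :=
  Finsupp.mapRange.linearMap
    (CliffordAlgebra.contractLeft (Q := (0 : QuadraticForm ℂ (Fin d → ℂ)))
      (∑ i, (m₁ i : ℂ) • LinearMap.proj i))

/-- The differential
`d^B = ∑_{m₁ ∈ Δ} [m₁] ⊗ contr(m₁) + ∑_{n₁ ∈ Δ^∨} [n₁] ⊗ (∧ n₁)`. -/
def dB (KN : AddSubmonoid (Fin d → ℤ)) (Δ ΔV : Finset (Fin d → ℤ)) :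
    Amb d →ₗ[ℂ] Amb d :=
  (∑ m₁ ∈ Δ, projB KN ∘ₗ shiftB (m₁, 0) ∘ₗ contrB m₁) +
  (∑ n₁ ∈ ΔV, projB KN ∘ₗ shiftB (0, n₁) ∘ₗ wedgeB n₁)

/-! The reduction `projB` keeps exactly the monomials `p` of the cone `K_N^∨ × K_N` with
`p.1·p.2 = 0`. On that cone the symmetric pairing `crossPair a b = a.1·b.2 + b.1·a.2` is
nonnegative and `(a + b).1·(a + b).2 = a.1·a.2 + b.1·b.2 + crossPair a b`, so admissibility of
`p + a + b` forces admissibility of `p + a` and of `a + b`. Hence the intermediate reduction in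
`d^B ∘ d^B` is invisible and `(d^B)²` is the sum of the anticommutators of its terms. By the
Clifford relations these are `crossPair a b • id`, and `crossPair a b = 0` whenever `p + a + b`
is admissible. The same positivity shows that a single term kills an admissible `p` whenever
its cross pairing with `p` is nonzero. -/

@[simp] lemma dotZ_add_left (a b c : Fin d → ℤ) : dotZ (a + b) c = dotZ a c + dotZ b c :=
  add_dotProduct a b c

@[simp] lemma dotZ_add_right (a b c : Fin d → ℤ) : dotZ a (b + c) = dotZ a b + dotZ a c :=
  dotProduct_add a b c

@[simp] lemma dotZ_zero_left (a : Fin d → ℤ) : dotZ 0 a = 0 := zero_dotProduct a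

@[simp] lemma dotZ_zero_right (a : Fin d → ℤ) : dotZ a 0 = 0 := dotProduct_zero a

def dualConeB (KN : AddSubmonoid (Fin d → ℤ)) : AddSubmonoid (Fin d → ℤ) where
  carrier := {m | ∀ n ∈ KN, 0 ≤ dotZ m n}
  add_mem' {a b} ha hb n hn := by
    rw [dotZ_add_left]
    exact add_nonneg (ha n hn) (hb n hn)
  zero_mem' n _ := by simp

lemma mem_dualConeB_closure {ΔV : Finset (Fin d → ℤ)} {m : Fin d → ℤ}
    (h : ∀ n ∈ ΔV, 0 ≤ dotZ m n) : m ∈ dualConeB (AddSubmonoid.closure (ΔV : Set _)) := by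
  intro n hn
  induction hn using AddSubmonoid.closure_induction with
  | mem x hx => exact h x hx
  | zero => simp
  | add x y _ _ hx hy => rw [dotZ_add_right]; positivity

def coneB (KN : AddSubmonoid (Fin d → ℤ)) : AddSubmonoid ((Fin d → ℤ) × (Fin d → ℤ)) :=
  (dualConeB KN).prod KN

def selfPair (a : (Fin d → ℤ) × (Fin d → ℤ)) : ℤ := dotZ a.1 a.2

def crossPair (a b : (Fin d → ℤ) × (Fin d → ℤ)) : ℤ := dotZ a.1 b.2 + dotZ b.1 a.2

lemma selfPair_add (a b : (Fin d → ℤ) × (Fin d → ℤ)) :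
    selfPair (a + b) = selfPair a + selfPair b + crossPair a b := by
  simp only [selfPair, crossPair, Prod.fst_add, Prod.snd_add, dotZ_add_left, dotZ_add_right]
  ring

lemma crossPair_nonneg {KN : AddSubmonoid (Fin d → ℤ)} {a b : (Fin d → ℤ) × (Fin d → ℤ)}
    (ha : a ∈ coneB KN) (hb : b ∈ coneB KN) : 0 ≤ crossPair a b :=
  add_nonneg (ha.1 _ hb.2) (hb.1 _ ha.2)

lemma selfPair_nonneg {KN : AddSubmonoid (Fin d → ℤ)} {a : (Fin d → ℤ) × (Fin d → ℤ)}
    (ha : a ∈ coneB KN) : 0 ≤ selfPair a :=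
  ha.1 _ ha.2

lemma admB_iff {KN : AddSubmonoid (Fin d → ℤ)} {p : (Fin d → ℤ) × (Fin d → ℤ)} :
    AdmB KN p ↔ p ∈ coneB KN ∧ selfPair p = 0 :=
  and_assoc.symm

lemma AdmB.of_add {KN : AddSubmonoid (Fin d → ℤ)} {a b : (Fin d → ℤ) × (Fin d → ℤ)}
    (h : AdmB KN (a + b)) (ha : a ∈ coneB KN) (hb : b ∈ coneB KN) :
    AdmB KN a ∧ AdmB KN b ∧ crossPair a b = 0 := by
  have hab := (admB_iff.mp h).2
  rw [selfPair_add] at hab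
  have := selfPair_nonneg ha
  have := selfPair_nonneg hb
  have := crossPair_nonneg ha hb
  exact ⟨admB_iff.mpr ⟨ha, by omega⟩, admB_iff.mpr ⟨hb, by omega⟩, by omega⟩

lemma projB_single (KN : AddSubmonoid (Fin d → ℤ)) (p : (Fin d → ℤ) × (Fin d → ℤ))
    (w : Lam d) :
    projB KN (Finsupp.single p w) = if AdmB KN p then Finsupp.single p w else 0 := by
  simp only [projB, Finsupp.lsum_single]
  split <;> simp

lemma shiftB_single (a p : (Fin d → ℤ) × (Fin d → ℤ)) (w : Lam d) :
    shiftB a (Finsupp.single p w) = Finsupp.single (p + a) w :=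
  Finsupp.mapDomain_single

def termB (KN : AddSubmonoid (Fin d → ℤ)) (a : (Fin d → ℤ) × (Fin d → ℤ))
    (g : Lam d →ₗ[ℂ] Lam d) : Amb d →ₗ[ℂ] Amb d :=
  projB KN ∘ₗ shiftB a ∘ₗ Finsupp.mapRange.linearMap g

lemma termB_single (KN : AddSubmonoid (Fin d → ℤ)) (a p : (Fin d → ℤ) × (Fin d → ℤ))
    (g : Lam d →ₗ[ℂ] Lam d) (w : Lam d) :
    termB KN a g (Finsupp.single p w) = projB KN (Finsupp.single (p + a) (g w)) := by
  simp [termB, shiftB_single]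

lemma termB_single_eq_zero {KN : AddSubmonoid (Fin d → ℤ)} {a p : (Fin d → ℤ) × (Fin d → ℤ)}
    (hp : AdmB KN p) (ha : a ∈ coneB KN) (hpa : crossPair p a ≠ 0)
    (g : Lam d →ₗ[ℂ] Lam d) (w : Lam d) : termB KN a g (Finsupp.single p w) = 0 := by
  rw [termB_single, projB_single, if_neg]
  exact fun h => hpa (h.of_add (admB_iff.mp hp).1 ha).2.2

lemma termB_termB_single {KN : AddSubmonoid (Fin d → ℤ)} {p a b : (Fin d → ℤ) × (Fin d → ℤ)}
    (hp : AdmB KN p) (ha : a ∈ coneB KN) (hb : b ∈ coneB KN)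
    (ga gb : Lam d →ₗ[ℂ] Lam d) (w : Lam d) :
    termB KN b gb (termB KN a ga (Finsupp.single p w))
      = projB KN (Finsupp.single (p + a + b) (gb (ga w))) := by
  rw [termB_single, projB_single]
  split_ifs with hpa
  · rw [termB_single]
  · have hpab : ¬AdmB KN (p + a + b) := fun h =>
      hpa (h.of_add (add_mem (admB_iff.mp hp).1 ha) hb).1
    rw [map_zero, projB_single, if_neg hpab]

def contrL (m : Fin d → ℤ) : Lam d →ₗ[ℂ] Lam d :=
  CliffordAlgebra.contractLeft (Q := (0 : QuadraticForm ℂ (Fin d → ℂ)))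
    (∑ i, (m i : ℂ) • LinearMap.proj i)

def wedgeL (n : Fin d → ℤ) : Lam d →ₗ[ℂ] Lam d :=
  LinearMap.mulLeft ℂ (ExteriorAlgebra.ι ℂ (fun i => (n i : ℂ)))

lemma contrL_contrL_add (m m' : Fin d → ℤ) (w : Lam d) :
    contrL m (contrL m' w) + contrL m' (contrL m w) = 0 := by
  rw [contrL, contrL, CliffordAlgebra.contractLeft_comm, neg_add_cancel]

lemma wedgeL_wedgeL_add (n n' : Fin d → ℤ) (w : Lam d) :
    wedgeL n (wedgeL n' w) + wedgeL n' (wedgeL n w) = 0 := by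
  simp only [wedgeL, LinearMap.mulLeft_apply, ← mul_assoc, ← add_mul,
    ExteriorAlgebra.ι_add_mul_swap, zero_mul]

lemma contrL_wedgeL_add (m n : Fin d → ℤ) (w : Lam d) :
    contrL m (wedgeL n w) + wedgeL n (contrL m w) = (dotZ m n : ℂ) • w := by
  simp only [contrL, wedgeL, LinearMap.mulLeft_apply, CliffordAlgebra.contractLeft_ι_mul,
    sub_add_cancel]
  simp [dotZ, LinearMap.sum_apply]

/-- A generator of the differential: `Sum.inl m₁` for `m₁ ∈ Δ`, `Sum.inr n₁` for `n₁ ∈ Δ^∨`. -/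
def genShift : (Fin d → ℤ) ⊕ (Fin d → ℤ) → (Fin d → ℤ) × (Fin d → ℤ) :=
  Sum.elim (fun m => (m, 0)) (fun n => (0, n))

def genOp : (Fin d → ℤ) ⊕ (Fin d → ℤ) → Lam d →ₗ[ℂ] Lam d :=
  Sum.elim contrL wedgeL

lemma genOp_genOp_add (x y : (Fin d → ℤ) ⊕ (Fin d → ℤ)) (w : Lam d) :
    genOp x (genOp y w) + genOp y (genOp x w) =
      (crossPair (genShift x) (genShift y) : ℂ) • w := by
  rcases x with m | n <;> rcases y with m' | n'
  · simp [genOp, genShift, crossPair, contrL_contrL_add]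
  · simp [genOp, genShift, crossPair, contrL_wedgeL_add]
  · simp [genOp, genShift, crossPair, add_comm (wedgeL n _), contrL_wedgeL_add]
  · simp [genOp, genShift, crossPair, wedgeL_wedgeL_add]

lemma genShift_mem_coneB {KN : AddSubmonoid (Fin d → ℤ)} {Δ ΔV : Finset (Fin d → ℤ)}
    (hΔ : ∀ m ∈ Δ, m ∈ dualConeB KN) (hΔV : ∀ n ∈ ΔV, n ∈ KN) :
    ∀ {x}, x ∈ Δ.disjSum ΔV → genShift x ∈ coneB KN
  | .inl m, hx => ⟨hΔ m (Finset.inl_mem_disjSum.mp hx), KN.zero_mem⟩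
  | .inr n, hx => ⟨(dualConeB KN).zero_mem, hΔV n (Finset.inr_mem_disjSum.mp hx)⟩

lemma dB_eq_sum_termB (KN : AddSubmonoid (Fin d → ℤ)) (Δ ΔV : Finset (Fin d → ℤ)) :
    dB KN Δ ΔV = ∑ x ∈ Δ.disjSum ΔV, termB KN (genShift x) (genOp x) := by
  rw [Finset.sum_disjSum]
  rfl

lemma Finset.sum_sum_eq_zero_of_antisymm {ι R G : Type*} [DivisionRing R] [CharZero R]
    [AddCommGroup G] [Module R G] (s : Finset ι) (g : ι → ι → G)
    (h : ∀ a ∈ s, ∀ b ∈ s, g a b + g b a = 0) :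
    ∑ a ∈ s, ∑ b ∈ s, g a b = 0 := by
  have hS : ∑ a ∈ s, ∑ b ∈ s, g a b = -∑ a ∈ s, ∑ b ∈ s, g a b :=
    calc ∑ a ∈ s, ∑ b ∈ s, g a b = ∑ b ∈ s, ∑ a ∈ s, g a b := Finset.sum_comm
      _ = ∑ b ∈ s, ∑ a ∈ s, -g b a := Finset.sum_congr rfl fun b hb =>
          Finset.sum_congr rfl fun a ha => eq_neg_of_add_eq_zero_left (h a ha b hb)
      _ = -∑ a ∈ s, ∑ b ∈ s, g a b := by simp only [Finset.sum_neg_distrib]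
  have h2S : (2 : R) • ∑ a ∈ s, ∑ b ∈ s, g a b = 0 := by
    rw [two_smul]
    nth_rewrite 2 [hS]
    exact add_neg_cancel _
  exact (smul_eq_zero.mp h2S).resolve_left two_ne_zero

lemma projB_single_crossPair_smul_eq_zero {KN : AddSubmonoid (Fin d → ℤ)}
    {p a b : (Fin d → ℤ) × (Fin d → ℤ)} (hp : AdmB KN p) (ha : a ∈ coneB KN)
    (hb : b ∈ coneB KN) (w : Lam d) :
    projB KN (Finsupp.single (p + a + b) ((crossPair a b : ℂ) • w)) = 0 := by
  rw [projB_single]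
  split_ifs with h
  · rw [add_assoc] at h
    have hab := (h.of_add (admB_iff.mp hp).1 (add_mem ha hb)).2.1
    rw [(hab.of_add ha hb).2.2, Int.cast_zero, zero_smul, Finsupp.single_zero]
  · rfl

lemma dB_dB_single {KN : AddSubmonoid (Fin d → ℤ)} {Δ ΔV : Finset (Fin d → ℤ)}
    (hΔ : ∀ m ∈ Δ, m ∈ dualConeB KN) (hΔV : ∀ n ∈ ΔV, n ∈ KN)
    {p : (Fin d → ℤ) × (Fin d → ℤ)} (hp : AdmB KN p) (w : Lam d) :
    dB KN Δ ΔV (dB KN Δ ΔV (Finsupp.single p w)) = 0 := by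
  have hgen : ∀ x ∈ Δ.disjSum ΔV, genShift x ∈ coneB KN := fun _ => genShift_mem_coneB hΔ hΔV
  simp only [dB_eq_sum_termB, LinearMap.sum_apply, map_sum]
  rw [Finset.sum_comm]
  refine Finset.sum_sum_eq_zero_of_antisymm (R := ℂ) _ _ fun x hx y hy => ?_
  rw [termB_termB_single hp (hgen x hx) (hgen y hy),
    termB_termB_single hp (hgen y hy) (hgen x hx), add_right_comm p (genShift y), ← map_add,
    ← Finsupp.single_add, genOp_genOp_add]
  exact projB_single_crossPair_smul_eq_zero hp (hgen x hx) (hgen y hy) w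

lemma dB_dB_of_mem_supported {KN : AddSubmonoid (Fin d → ℤ)} {Δ ΔV : Finset (Fin d → ℤ)}
    (hΔ : ∀ m ∈ Δ, m ∈ dualConeB KN) (hΔV : ∀ n ∈ ΔV, n ∈ KN) {v : Amb d}
    (hv : v ∈ Finsupp.supported (Lam d) ℂ {p | AdmB KN p}) :
    dB KN Δ ΔV (dB KN Δ ΔV v) = 0 := by
  rw [← Finsupp.sum_single v, Finsupp.sum, map_sum, map_sum]
  exact Finset.sum_eq_zero fun p hp => dB_dB_single hΔ hΔV (hv hp) (v p)

theorem stmt17_general (Δ ΔV : Finset (Fin d → ℤ))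
    (hpair : ∀ m ∈ Δ, ∀ n ∈ ΔV, 0 ≤ dotZ m n)
    (KN : AddSubmonoid (Fin d → ℤ)) (hKN : KN = AddSubmonoid.closure (ΔV : Set _)) :
    (∀ p : (Fin d → ℤ) × (Fin d → ℤ), AdmB KN p → ∀ m₁ ∈ Δ, ∀ w : Lam d,
      dotZ m₁ p.2 ≠ 0 →
        (projB KN ∘ₗ shiftB (m₁, 0) ∘ₗ contrB m₁) (Finsupp.single p w) = 0) ∧
    (∀ p : (Fin d → ℤ) × (Fin d → ℤ), AdmB KN p → ∀ n₁ ∈ ΔV, ∀ w : Lam d,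
      dotZ p.1 n₁ ≠ 0 →
        (projB KN ∘ₗ shiftB (0, n₁) ∘ₗ wedgeB n₁) (Finsupp.single p w) = 0) ∧
    (∀ v ∈ Finsupp.supported (Lam d) ℂ {p | AdmB KN p},
      dB KN Δ ΔV (dB KN Δ ΔV v) = 0) := by
  have hΔdual : ∀ m ∈ Δ, m ∈ dualConeB KN := fun m hm =>
    hKN ▸ mem_dualConeB_closure (hpair m hm)
  have hΔVKN : ∀ n ∈ ΔV, n ∈ KN := fun n hn => hKN ▸ AddSubmonoid.subset_closure hn
  refine ⟨fun p hp m₁ hm₁ w hne => ?_, fun p hp n₁ hn₁ w hne => ?_,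
    fun v hv => dB_dB_of_mem_supported hΔdual hΔVKN hv⟩
  · exact termB_single_eq_zero (a := genShift (.inl m₁)) hp
      (genShift_mem_coneB hΔdual hΔVKN (Finset.inl_mem_disjSum.mpr hm₁))
      (by simpa [crossPair, genShift] using hne) (genOp (.inl m₁)) w
  · exact termB_single_eq_zero (a := genShift (.inr n₁)) hp
      (genShift_mem_coneB hΔdual hΔVKN (Finset.inr_mem_disjSum.mpr hn₁))
      (by simpa [crossPair, genShift] using hne) (genOp (.inr n₁)) w

/-- in the complex `𝒞_{K_N^∨ − deg, K_N, N}`, for a basis element indexed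
by `(m − deg, n, P)` with `m ∈ K_N^∨`, `n ∈ K_N`, `m·n = 0`:  the differential term of
`m₁ ∈ Δ` (which acts by contracting `P` by `m₁`) is nonzero only when `m₁·n = 0`, the
differential term of `n₁ ∈ Δ^∨` (which acts by wedging `P` with `n₁`) is nonzero only
when `m·n₁ = 0`, and the total differential squares to zero. -/
theorem stmt17 (deg degV : Fin d → ℤ) (Δ ΔV : Finset (Fin d → ℤ))
    (hΔ : ∀ m ∈ Δ, dotZ m degV = 1)
    (hΔV : ∀ n ∈ ΔV, dotZ deg n = 1)
    (hpair : ∀ m ∈ Δ, ∀ n ∈ ΔV, 0 ≤ dotZ m n)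
    (KN : AddSubmonoid (Fin d → ℤ)) (hKN : KN = AddSubmonoid.closure (ΔV : Set _)) :
    (∀ p : (Fin d → ℤ) × (Fin d → ℤ), AdmB KN p → ∀ m₁ ∈ Δ, ∀ w : Lam d,
      dotZ m₁ p.2 ≠ 0 →
        (projB KN ∘ₗ shiftB (m₁, 0) ∘ₗ contrB m₁) (Finsupp.single p w) = 0) ∧
    (∀ p : (Fin d → ℤ) × (Fin d → ℤ), AdmB KN p → ∀ n₁ ∈ ΔV, ∀ w : Lam d,
      dotZ p.1 n₁ ≠ 0 →
        (projB KN ∘ₗ shiftB (0, n₁) ∘ₗ wedgeB n₁) (Finsupp.single p w) = 0) ∧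
    (∀ v ∈ Finsupp.supported (Lam d) ℂ {p | AdmB KN p},
      dB KN Δ ΔV (dB KN Δ ΔV v) = 0) :=
  stmt17_general Δ ΔV hpair KN hKN

end
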